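/- arXiv:1302.1174 — 2 statements merged into one kernel-verified Lean document; each statement's English description precedes it below -/
import Mathlib

section
/- The angle θ = arccos(−2/3) appearing in the Boerdijk–Coxeter helix is not a rational multiple of π; that is, arccos(−2/3)/π is irrational. Consequently there is no positive integer n with n·θ an integer multiple of 2π, so the BC helix has no non-trivial rotational symmetry about its axis. -/
open Real

theorem irrational_arccos_div_pi {q : ℚ} (h₁ : -1 ≤ (q : ℝ)) (h₂ : (q : ℝ) ≤ 1)
    (hq : (q : ℝ) ∉ ({-1, -1 / 2, 0, 1 / 2, 1} : Set ℝ)) : Irrational (arccos q / π) := by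
  rintro ⟨r, hr⟩
  have hθ : arccos q = r * π := by rw [hr, div_mul_cancel₀ _ pi_ne_zero]
  exact hq (cos_arccos h₁ h₂ ▸ niven ⟨r, hθ⟩ ⟨q, cos_arccos h₁ h₂⟩)

theorem nat_mul_ne_int_mul_two_pi {θ : ℝ} (hθ : Irrational (θ / π)) {n : ℕ} (hn : n ≠ 0)
    (k : ℤ) : (n : ℝ) * θ ≠ k * (2 * π) := by
  intro h
  refine hθ ⟨2 * k / n, ?_⟩
  push_cast
  field_simp
  linarith

theorem bc_helix_angle_irrational :
    Irrational (Real.arccos (-2/3) / Real.pi) ∧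
    ∀ n : ℕ, 0 < n → ¬ ∃ k : ℤ, (n : ℝ) * Real.arccos (-2/3) = (k : ℝ) * (2 * Real.pi) := by
  have hθ : Irrational (arccos (-2 / 3) / π) := by
    simpa using irrational_arccos_div_pi (q := -2 / 3) (by norm_num) (by norm_num) (by norm_num)
  exact ⟨hθ, fun n hn ⟨k, hk⟩ ↦ nat_mul_ne_int_mul_two_pi hθ hn.ne' k hk⟩
end

section
/- Let s_n = ((3√3/10) cos(nθ), (3√3/10) sin(nθ), n/√10) for n ∈ ℤ, where θ = arccos(−2/3). Then for every n ∈ ℤ and every k ∈ {1, 2, 3}, the Euclidean distance between s_n and s_{n+k} equals 1. In particular, every four consecutive points s_n, s_{n+1}, s_{n+2}, s_{n+3} form a regular tetrahedron of edge length 1. -/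
open Matrix

noncomputable section

noncomputable def euclDist (a b : Fin 3 → ℝ) : ℝ :=
  Real.sqrt (∑ i, (a i - b i) ^ 2)

/-- The points of the unit-edge Boerdijk–Coxeter helix. -/
noncomputable def bcPoint (n : ℤ) : Fin 3 → ℝ :=
  ![3*Real.sqrt 3/10 * Real.cos ((n : ℝ) * Real.arccos (-2/3)),
    3*Real.sqrt 3/10 * Real.sin ((n : ℝ) * Real.arccos (-2/3)),
    (n : ℝ)/Real.sqrt 10]

/-!
Consecutive helix points differ by a rotation through θ about the axis and a translation by
h = 1/√10 along it, so the squared distance from s_n to s_{n+k} is the squared chord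
2r²(1 - cos kθ) plus (kh)². With cos θ = -2/3 the multiple-angle formulas give
cos 2θ = -1/9 and cos 3θ = 22/27, and r² = 27/100 makes the sum equal to 1 for k = 1, 2, 3.
-/

open Real

theorem sq_chord_circle (r x y : ℝ) :
    (r * cos x - r * cos y) ^ 2 + (r * sin x - r * sin y) ^ 2 = 2 * r ^ 2 * (1 - cos (x - y)) := by
  rw [cos_sub]
  linear_combination r ^ 2 * (sin_sq_add_cos_sq x + sin_sq_add_cos_sq y)

theorem sum_sq_sub_bcPoint (n k : ℤ) :
    ∑ i, (bcPoint n i - bcPoint (n + k) i) ^ 2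
      = 27 / 50 * (1 - cos (k * arccos (-2 / 3))) + k ^ 2 / 10 := by
  have hsqrt3 : √3 ^ 2 = 3 := sq_sqrt (by norm_num)
  have hsqrt10 : √10 ^ 2 = 10 := sq_sqrt (by norm_num)
  have hangle :
      (n : ℝ) * arccos (-2 / 3) - (n + k) * arccos (-2 / 3) = -(k * arccos (-2 / 3)) := by
    ring
  simp only [bcPoint, Fin.sum_univ_three, cons_val_zero, cons_val_one, cons_val_two,
    tail_cons, head_cons, Int.cast_add]
  rw [sq_chord_circle, hangle, cos_neg]
  field_simp
  rw [hsqrt3, hsqrt10]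
  ring

theorem cos_arccos_neg_two_thirds : cos (arccos (-2 / 3)) = -2 / 3 :=
  cos_arccos (by norm_num) (by norm_num)

theorem cos_two_mul_arccos_neg_two_thirds : cos (2 * arccos (-2 / 3)) = -1 / 9 := by
  rw [cos_two_mul, cos_arccos_neg_two_thirds]
  norm_num

theorem cos_three_mul_arccos_neg_two_thirds : cos (3 * arccos (-2 / 3)) = 22 / 27 := by
  rw [cos_three_mul, cos_arccos_neg_two_thirds]
  norm_num

theorem bc_helix_unit_edges :
    ∀ n k : ℤ, (k = 1 ∨ k = 2 ∨ k = 3) → euclDist (bcPoint n) (bcPoint (n + k)) = 1 := by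
  intro n k hk
  rw [euclDist, sum_sq_sub_bcPoint, sqrt_eq_one]
  rcases hk with rfl | rfl | rfl
  · rw [Int.cast_one, one_mul, cos_arccos_neg_two_thirds]; norm_num
  · rw [Int.cast_two, cos_two_mul_arccos_neg_two_thirds]; norm_num
  · rw [Int.cast_three, cos_three_mul_arccos_neg_two_thirds]; norm_num
end
end
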